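/- arXiv:1110.6896 — 2 statements merged into one kernel-verified Lean document; each statement's English description precedes it below -/
import Mathlib

section
/- If Z_n → N(μ, σ²) in distribution with σ > 0 and μ ≠ 0 fixed, and c_n → ∞ is a sequence of positive reals, then c_n Z_n² → +∞ in probability, i.e. for every M > 0, P(c_n Z_n² > M) → 1. -/
/-!
Since the variance is positive, the Gaussian limit law gives no mass to `{0}`, hence little mass
to a small closed ball around `0`. By the portmanteau theorem the laws of `Z n` then eventually give
little mass to that ball as well, while `c n Z_n² ≤ M` forces `|Z n| ≤ √(M / c n) → 0`.
-/

open MeasureTheory ProbabilityTheory Filter Set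

/-- Convergence in distribution of a sequence of real random variables to a limit law `ν`. -/
def TendstoInDist {Ω : Type*} [MeasurableSpace Ω] (μ : Measure Ω) (X : ℕ → Ω → ℝ)
    (ν : Measure ℝ) : Prop :=
  ∀ f : BoundedContinuousFunction ℝ ℝ,
    Tendsto (fun n => ∫ ω, f (X n ω) ∂μ) atTop (nhds (∫ x, f x ∂ν))

open Metric Topology

lemma exists_measure_closedBall_lt {α : Type*} [MetricSpace α] [MeasurableSpace α]
    [OpensMeasurableSpace α] {ν : Measure α} [IsFiniteMeasure ν] {x : α} (hx : ν {x} = 0)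
    {ε : ENNReal} (hε : 0 < ε) : ∃ δ > 0, ν (closedBall x δ) < ε := by
  have hlim : Tendsto (fun r => ν (cthickening r {x})) (𝓝 0) (𝓝 0) := by
    rw [← hx]
    exact tendsto_measure_cthickening_of_isClosed ⟨1, one_pos, measure_ne_top ν _⟩
      isClosed_singleton
  obtain ⟨δ, hνδ, hδ⟩ :=
    ((hlim.mono_left nhdsWithin_le_nhds).eventually (gt_mem_nhds hε)).and
      self_mem_nhdsWithin |>.exists (f := 𝓝[>] (0 : ℝ))
  exact ⟨δ, hδ, by rwa [← cthickening_singleton x hδ.le]⟩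

namespace TendstoInDist

variable {Ω : Type*} [MeasurableSpace Ω] {μ : Measure Ω} [IsProbabilityMeasure μ]
  {X : ℕ → Ω → ℝ} {ν : Measure ℝ} [IsProbabilityMeasure ν]

lemma tendsto_probabilityMeasure_map (hX : ∀ n, Measurable (X n)) (h : TendstoInDist μ X ν) :
    Tendsto (β := ProbabilityMeasure ℝ)
      (fun n => ⟨μ.map (X n), Measure.isProbabilityMeasure_map (hX n).aemeasurable⟩) atTop
      (𝓝 ⟨ν, ‹_›⟩) := by
  refine ProbabilityMeasure.tendsto_iff_forall_integral_tendsto.2 fun f => ?_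
  simpa [integral_map (hX _).aemeasurable f.continuous.aestronglyMeasurable] using h f

lemma limsup_measure_preimage_le (hX : ∀ n, Measurable (X n)) (h : TendstoInDist μ X ν)
    {F : Set ℝ} (hF : IsClosed F) :
    limsup (fun n => μ (X n ⁻¹' F)) atTop ≤ ν F := by
  simpa [Measure.map_apply (hX _) hF.measurableSet] using
    ProbabilityMeasure.limsup_measure_closed_le_of_tendsto
      (tendsto_probabilityMeasure_map hX h) hF

lemma tendsto_measure_abs_le_zero (hX : ∀ n, Measurable (X n)) (h : TendstoInDist μ X ν)
    (hν : ν {0} = 0) {a : ℕ → ℝ} (ha : Tendsto a atTop (𝓝 0)) :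
    Tendsto (fun n => μ {ω | |X n ω| ≤ a n}) atTop (𝓝 0) := by
  refine ENNReal.tendsto_nhds_zero.2 fun ε hε => ?_
  obtain ⟨δ, hδ, hνδ⟩ := exists_measure_closedBall_lt hν hε
  have hball : ∀ᶠ n in atTop, μ (X n ⁻¹' closedBall 0 δ) < ε := eventually_lt_of_limsup_lt
    ((limsup_measure_preimage_le hX h isClosed_closedBall).trans_lt hνδ)
  filter_upwards [hball, ha.eventually_le_const hδ] with n hn han
  refine le_trans (measure_mono fun ω hω => ?_) hn.le
  simpa using (show |X n ω| ≤ a n from hω).trans han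

lemma tendsto_measure_lt_abs_one (hX : ∀ n, Measurable (X n)) (h : TendstoInDist μ X ν)
    (hν : ν {0} = 0) {a : ℕ → ℝ} (ha : Tendsto a atTop (𝓝 0)) :
    Tendsto (fun n => μ {ω | a n < |X n ω|}) atTop (𝓝 1) := by
  have hcompl : ∀ n, μ {ω | a n < |X n ω|} = 1 - μ {ω | |X n ω| ≤ a n} := fun n => by
    rw [← prob_compl_eq_one_sub (measurableSet_le (hX n).abs measurable_const)]
    simp only [compl_ofPred, not_le]
  simpa [hcompl] using ENNReal.Tendsto.sub tendsto_const_nhds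
    (tendsto_measure_abs_le_zero hX h hν ha) (Or.inl ENNReal.one_ne_top)

end TendstoInDist

lemma lt_mul_sq_iff_sqrt_div_lt_abs {M c z : ℝ} (hM : 0 ≤ M) (hc : 0 < c) :
    M < c * z ^ 2 ↔ √(M / c) < |z| := by
  rw [← Real.sqrt_sq_eq_abs, Real.sqrt_lt_sqrt_iff (div_nonneg hM hc.le), div_lt_iff₀' hc]

theorem stmt6_general {Ω : Type*} [MeasurableSpace Ω] (μ : Measure Ω) [IsProbabilityMeasure μ]
    (Z : ℕ → Ω → ℝ) (hZmeas : ∀ n, Measurable (Z n))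
    (m σ : ℝ) (hσ : 0 < σ)
    (hZ : TendstoInDist μ Z (gaussianReal m (Real.toNNReal (σ ^ 2))))
    (c : ℕ → ℝ) (hc : Tendsto c atTop atTop) :
    ∀ M > (0:ℝ), Tendsto (fun n => μ {ω | M < c n * (Z n ω) ^ 2}) atTop (nhds 1) := by
  intro M hM
  have hatom : gaussianReal m (Real.toNNReal (σ ^ 2)) {0} = 0 :=
    gaussianReal_absolutelyContinuous m (by positivity) (measure_singleton 0)
  have hradius : Tendsto (fun n => √(M / c n)) atTop (𝓝 0) := by
    simpa using (tendsto_const_nhds.div_atTop hc).sqrt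
  refine (TendstoInDist.tendsto_measure_lt_abs_one hZmeas hZ hatom hradius).congr' ?_
  filter_upwards [hc.eventually_gt_atTop 0] with n hn
  simp only [lt_mul_sq_iff_sqrt_div_lt_abs hM.le hn]

theorem stmt6 {Ω : Type*} [MeasurableSpace Ω] (μ : Measure Ω) [IsProbabilityMeasure μ]
    (Z : ℕ → Ω → ℝ) (hZmeas : ∀ n, Measurable (Z n))
    (m σ : ℝ) (hm : m ≠ 0) (hσ : 0 < σ)
    (hZ : TendstoInDist μ Z (gaussianReal m (Real.toNNReal (σ ^ 2))))
    (c : ℕ → ℝ) (hc_pos : ∀ n, 0 < c n) (hc : Tendsto c atTop atTop) :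
    ∀ M > (0:ℝ), Tendsto (fun n => μ {ω | M < c n * (Z n ω) ^ 2}) atTop (nhds 1) :=
  stmt6_general μ Z hZmeas m σ hσ hZ c hc
end

section
/- If √m_n (D_n − δ_n) → N(0, σ²) in distribution with σ > 0, δ_n = k/m_n^β for some k ≠ 0 and 0 < β < 1/2, and σ̂_n² → σ² > 0 in probability, then m_n D_n²/σ̂_n² → +∞ in probability. -/
/-!
Write `√m_n D_n = Z_n + a_n` with `Z_n = √m_n (D_n - δ_n)`, which converges in law to a Gaussian,
and `a_n = √m_n δ_n`, so that `|a_n| = |k| m_n ^ (1/2 - β) → ∞`. By the portmanteau theorem and the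
tightness of the limit law, `P(|Z_n + a_n| ≤ C) → 0` for every `C`. Off this event and off
`{|σ̂_n² - σ²| ≥ σ²/2}` we have `0 < σ̂_n² < 2σ²`, hence `m_n D_n² / σ̂_n² > C² / (2σ²) = M`
for `C = √(2Mσ²)`.
-/

open MeasureTheory ProbabilityTheory Filter Set

/-- Convergence in probability to a constant. -/
def TendstoInProb {Ω : Type*} [MeasurableSpace Ω] (μ : Measure Ω) (X : ℕ → Ω → ℝ)
    (c : ℝ) : Prop :=
  ∀ ε > (0:ℝ), Tendsto (fun n => μ {ω | ε ≤ |X n ω - c|}) atTop (nhds 0)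

open scoped Topology

lemma tendsto_measure_abs_gt_atTop_zero {ν : Measure ℝ} [IsFiniteMeasure ν] :
    Tendsto (fun r : ℝ ↦ ν {x | r < |x|}) atTop (𝓝 0) := by
  simpa only [iSup_singleton, Real.norm_eq_abs] using
    tendsto_measure_norm_gt_of_isTightMeasureSet (isTightMeasureSet_singleton (μ := ν))

section

variable {Ω : Type*} [MeasurableSpace Ω] {μ : Measure Ω} [IsProbabilityMeasure μ]
  {X : ℕ → Ω → ℝ} {ν : Measure ℝ} [IsProbabilityMeasure ν]

lemma TendstoInDist.tendsto_map (hX : ∀ n, AEMeasurable (X n) μ)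
    (h : TendstoInDist μ X ν) :
    Tendsto (β := ProbabilityMeasure ℝ)
      (fun n ↦ ⟨μ.map (X n), Measure.isProbabilityMeasure_map (hX n)⟩) atTop (𝓝 ⟨ν, ‹_›⟩) := by
  refine ProbabilityMeasure.tendsto_iff_forall_integral_tendsto.mpr fun f ↦ ?_
  simpa only [ProbabilityMeasure.coe_mk, integral_map (hX _) f.continuous.aestronglyMeasurable]
    using h f

lemma TendstoInDist.limsup_measure_preimage_le_s9
    (hX : ∀ n, AEMeasurable (X n) μ) (h : TendstoInDist μ X ν) {F : Set ℝ} (hF : IsClosed F) :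
    limsup (fun n ↦ μ (X n ⁻¹' F)) atTop ≤ ν F := by
  simpa only [ProbabilityMeasure.coe_mk, Measure.map_apply_of_aemeasurable (hX _) hF.measurableSet]
    using ProbabilityMeasure.limsup_measure_closed_le_of_tendsto (h.tendsto_map hX) hF

lemma TendstoInDist.tendsto_measure_abs_add_le_zero
    (hX : ∀ n, AEMeasurable (X n) μ) (h : TendstoInDist μ X ν) {a : ℕ → ℝ}
    (ha : Tendsto (fun n ↦ |a n|) atTop atTop) (C : ℝ) :
    Tendsto (fun n ↦ μ {ω | |X n ω + a n| ≤ C}) atTop (𝓝 0) := by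
  have hbound (K : ℝ) : limsup (fun n ↦ μ {ω | |X n ω + a n| ≤ C}) atTop ≤ ν {x | K < |x|} := by
    have hsub : ∀ᶠ n in atTop, {ω | |X n ω + a n| ≤ C} ⊆ X n ⁻¹' {x | K + 1 ≤ |x|} := by
      filter_upwards [ha.eventually_ge_atTop (K + 1 + C)] with n hn ω hω
      have : |a n| ≤ |X n ω + a n| + |X n ω| := by
        simpa using abs_sub (X n ω + a n) (X n ω)
      simp only [mem_preimage, mem_ofPred_eq] at hω ⊢
      linarith
    calc limsup (fun n ↦ μ {ω | |X n ω + a n| ≤ C}) atTop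
        ≤ limsup (fun n ↦ μ (X n ⁻¹' {x | K + 1 ≤ |x|})) atTop :=
          limsup_le_limsup (hsub.mono fun n hn ↦ measure_mono hn)
      _ ≤ ν {x | K + 1 ≤ |x|} :=
          h.limsup_measure_preimage_le_s9 hX (isClosed_le continuous_const continuous_abs)
      _ ≤ ν {x | K < |x|} := measure_mono fun x hx ↦ by
          simp only [mem_ofPred_eq] at hx ⊢
          linarith
  refine tendsto_of_le_liminf_of_limsup_le bot_le ?_
  exact ge_of_tendsto' tendsto_measure_abs_gt_atTop_zero hbound

end

lemma tendsto_measure_one_of_tendsto_measure_compl {ι : Type*} {l : Filter ι} {Ω : Type*}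
    [MeasurableSpace Ω] {μ : Measure Ω} [IsProbabilityMeasure μ] {s : ι → Set Ω}
    (h : Tendsto (fun i ↦ μ (s i)ᶜ) l (𝓝 0)) : Tendsto (fun i ↦ μ (s i)) l (𝓝 1) := by
  have hlower : Tendsto (fun i ↦ 1 - μ (s i)ᶜ) l (𝓝 1) := by
    simpa using ENNReal.Tendsto.sub tendsto_const_nhds h (Or.inl ENNReal.one_ne_top)
  refine tendsto_of_tendsto_of_tendsto_of_le_of_le hlower tendsto_const_nhds (fun i ↦ ?_)
    (fun i ↦ prob_le_one)
  rw [tsub_le_iff_right]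
  calc 1 = μ (s i ∪ (s i)ᶜ) := by rw [union_compl_self, measure_univ]
    _ ≤ μ (s i) + μ (s i)ᶜ := measure_union_le _ _

lemma tendsto_abs_sqrt_mul_div_rpow_atTop {ι : Type*} {l : Filter ι} {m : ι → ℝ}
    (hm : Tendsto m l atTop) {k β : ℝ} (hk : k ≠ 0) (hβ : β < 1 / 2) :
    Tendsto (fun i ↦ |√(m i) * (k / m i ^ β)|) l atTop := by
  have hpow : Tendsto (fun i ↦ |k| * m i ^ (1 / 2 - β)) l atTop :=
    ((tendsto_rpow_atTop (by linarith)).comp hm).const_mul_atTop (abs_pos.mpr hk)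
  refine hpow.congr' ?_
  filter_upwards [hm.eventually_gt_atTop 0] with i hi
  rw [abs_mul, abs_div, abs_of_nonneg (Real.sqrt_nonneg _), abs_of_pos (Real.rpow_pos_of_pos hi β),
    Real.rpow_sub hi, ← Real.sqrt_eq_rpow]
  ring

lemma lt_mul_sq_div_of_abs_sub_lt {M v s m d : ℝ} (hM : 0 < M) (hv : 0 < v)
    (hs : |s - v| < v / 2) (hm : 0 ≤ m) (hd : √(2 * M * v) < |√m * d|) :
    M < m * d ^ 2 / s := by
  obtain ⟨hs_lo, hs_hi⟩ := abs_lt.mp hs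
  have hsq : 2 * M * v < m * d ^ 2 := by
    have := pow_lt_pow_left₀ hd (Real.sqrt_nonneg _) two_ne_zero
    rwa [Real.sq_sqrt (by positivity), sq_abs, mul_pow, Real.sq_sqrt hm] at this
  rw [lt_div_iff₀ (by linarith)]
  nlinarith

theorem stmt9_general {Ω : Type*} [MeasurableSpace Ω] (μ : Measure Ω) [IsProbabilityMeasure μ]
    (D : ℕ → Ω → ℝ) (hDmeas : ∀ n, Measurable (D n))
    (m : ℕ → ℝ) (hm : Tendsto m atTop atTop)
    (k σ β : ℝ) (hk : k ≠ 0) (hσ : 0 < σ) (hβ : β ∈ Ioo (0:ℝ) (1/2))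
    (hD : TendstoInDist μ
      (fun n ω => Real.sqrt (m n) * (D n ω - k / m n ^ β))
      (gaussianReal 0 (Real.toNNReal (σ ^ 2))))
    (σhatsq : ℕ → Ω → ℝ)
    (hσhat : TendstoInProb μ σhatsq (σ ^ 2)) :
    ∀ M > (0:ℝ),
      Tendsto (fun n => μ {ω | M < m n * (D n ω) ^ 2 / σhatsq n ω}) atTop (nhds 1) := by
  intro M hM
  set C := √(2 * M * σ ^ 2)
  have hσ2 : 0 < σ ^ 2 := by positivity
  have hshift : Tendsto (fun n ↦ μ {ω | |√(m n) * D n ω| ≤ C}) atTop (𝓝 0) := by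
    simpa only [← mul_add, sub_add_cancel] using
      hD.tendsto_measure_abs_add_le_zero (fun n ↦ by fun_prop)
        (tendsto_abs_sqrt_mul_div_rpow_atTop hm hk hβ.2) C
  have hbad : Tendsto (fun n ↦ μ {ω | σ ^ 2 / 2 ≤ |σhatsq n ω - σ ^ 2|} +
      μ {ω | |√(m n) * D n ω| ≤ C}) atTop (𝓝 0) := by
    simpa using (hσhat (σ ^ 2 / 2) (by positivity)).add hshift
  refine tendsto_measure_one_of_tendsto_measure_compl <|
    tendsto_of_tendsto_of_tendsto_of_le_of_le' tendsto_const_nhds hbad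
      (.of_forall fun _ ↦ zero_le) ?_
  filter_upwards [hm.eventually_ge_atTop 0] with n hn
  refine (measure_mono fun ω hω ↦ ?_).trans (measure_union_le _ _)
  by_contra h
  simp only [mem_union, mem_ofPred_eq, not_or, not_le] at h
  exact hω (lt_mul_sq_div_of_abs_sub_lt hM hσ2 h.1 hn h.2)

theorem stmt9 {Ω : Type*} [MeasurableSpace Ω] (μ : Measure Ω) [IsProbabilityMeasure μ]
    (D : ℕ → Ω → ℝ) (hDmeas : ∀ n, Measurable (D n))
    (m : ℕ → ℝ) (hm_pos : ∀ n, 0 < m n) (hm : Tendsto m atTop atTop)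
    (k σ β : ℝ) (hk : k ≠ 0) (hσ : 0 < σ) (hβ : β ∈ Ioo (0:ℝ) (1/2))
    (hD : TendstoInDist μ
      (fun n ω => Real.sqrt (m n) * (D n ω - k / m n ^ β))
      (gaussianReal 0 (Real.toNNReal (σ ^ 2))))
    (σhatsq : ℕ → Ω → ℝ) (hσhat_meas : ∀ n, Measurable (σhatsq n))
    (hσhat_pos : ∀ n, ∀ᵐ ω ∂μ, 0 < σhatsq n ω)
    (hσhat : TendstoInProb μ σhatsq (σ ^ 2)) :
    ∀ M > (0:ℝ),
      Tendsto (fun n => μ {ω | M < m n * (D n ω) ^ 2 / σhatsq n ω}) atTop (nhds 1) :=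
  stmt9_general μ D hDmeas m hm k σ β hk hσ hβ hD σhatsq hσhat
end
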